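/- Let T̃ : ℝ² → ℝ be continuously differentiable with compact support, let φ : ℝ² → ℝ be twice continuously differentiable with bounded gradient ∇φ, and fix k, l ∈ ℝ². Let χ_l(x) = −2 sin(l·x), and define A^q(x) = (∂T̃/∂x_q)(x − ∇φ(x)) for q = 1, 2. Then the derivative at ε = 0 of ε ↦ (2π)⁻¹ ∫_{ℝ²} e^{−i k·x} T̃(x − ∇φ(x) − ε ∇χ_l(x)) dx equals Σ_{q=1,2} l_q ( Â^q(k+l) + Â^q(k−l) ), where Â^q denotes the Fourier transform of A^q and l_q denotes the q-th component of l. -/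

import Mathlib

open MeasureTheory
open scoped RealInnerProductSpace

noncomputable section

/-- `ℝ²` as a Euclidean (inner product) space. -/
abbrev E2 := EuclideanSpace ℝ (Fin 2)

/-- The Fourier transform with the paper's normalization:
`f̂(l) = (2π)⁻¹ ∫ e^{-i x·l} f(x) dx`. -/
noncomputable def ft (f : E2 → ℂ) (l : E2) : ℂ :=
  (2 * Real.pi)⁻¹ • ∫ x : E2, Complex.exp (-(Complex.I * (⟪x, l⟫ : ℂ))) * f x

/-- Fourier transform of a real-valued function. -/
noncomputable def ftR (f : E2 → ℝ) (l : E2) : ℂ := ft (fun x => (f x : ℂ)) l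

/-- The `q`-th partial derivative of `f : ℝ² → ℝ`. -/
noncomputable def pderiv2 (q : Fin 2) (f : E2 → ℝ) (x : E2) : ℝ :=
  fderiv ℝ f x (EuclideanSpace.single q 1)

/-- The anti-lensed gradient field `A^q(x) = (∂T/∂x_q)(x - ∇φ(x))`. -/
noncomputable def Aq (T φ : E2 → ℝ) (q : Fin 2) (x : E2) : ℝ :=
  pderiv2 q T (x - gradient φ x)

/-- The (negative) sine mode `χ_l(x) = -2 sin(l·x)`. -/
noncomputable def chil (l : E2) (x : E2) : ℝ := -(2 * Real.sin ⟪l, x⟫)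

/-!
For `|ε| < 1` the integrands are continuous and, since `∇φ` and `∇χ_l` are bounded, all supported
in one compact thickening of `supp T̃`; so the `ε`-derivative can be taken under the integral. As
`∇χ_l(x) = -2 cos(l·x) l`, at `ε = 0` it is the Fourier transform at `k` of
`2 cos(l·x) ∂_l T̃(x - ∇φ(x))`. The identity `2 cos(l·x) e^{-ik·x} = e^{-i(k+l)·x} + e^{-i(k-l)·x}`
splits this into transforms at `k ± l`, and `∂_l = Σ_q l_q ∂_q` gives the formula.
-/

open Filter Topology Set

section ParametricIntegral

variable {X G : Type*} [TopologicalSpace X] [T2Space X] [MeasurableSpace X]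
  [OpensMeasurableSpace X] {μ : Measure X} [IsFiniteMeasureOnCompacts μ]
  [NormedAddCommGroup G] [NormedSpace ℝ G]

theorem hasDerivAt_integral_of_continuous_of_compact_support {F F' : ℝ → X → G} {x₀ r : ℝ}
    (hr : 0 < r) {K : Set X} (hK : IsCompact K) (hF : ∀ ε, Continuous (F ε))
    (hF' : Continuous (Function.uncurry F'))
    (hFK : ∀ ε ∈ Metric.ball x₀ r, ∀ x ∉ K, F ε x = 0)
    (hderiv : ∀ ε ∈ Metric.ball x₀ r, ∀ x, HasDerivAt (F · x) (F' ε x) ε) :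
    HasDerivAt (fun ε => ∫ x, F ε x ∂μ) (∫ x, F' x₀ x ∂μ) x₀ := by
  have hF'K : ∀ ε ∈ Metric.ball x₀ r, ∀ x ∉ K, F' ε x = 0 := by
    intro ε hε x hx
    have hzero : (F · x) =ᶠ[𝓝 ε] fun _ => 0 :=
      eventually_of_mem (Metric.isOpen_ball.mem_nhds hε) fun δ hδ => hFK δ hδ x hx
    exact (hderiv ε hε x).unique ((hasDerivAt_const ε 0).congr_of_eventuallyEq hzero)
  obtain ⟨C, hC⟩ :=
    ((isCompact_closedBall x₀ r).prod hK).exists_bound_of_continuousOn hF'.continuousOn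
  have hball := Metric.ball_mem_nhds x₀ hr
  refine (hasDerivAt_integral_of_dominated_loc_of_deriv_le (bound := K.indicator fun _ => C)
    hball ?_ ?_ ?_ ?_ ?_ ?_).2
  · filter_upwards [hball] with ε hε
    exact ((hF ε).integrable_of_hasCompactSupport (.intro hK (hFK ε hε))).aestronglyMeasurable
  · exact (hF x₀).integrable_of_hasCompactSupport (.intro hK (hFK x₀ (Metric.mem_ball_self hr)))
  · exact ((hF'.comp (Continuous.prodMk_right x₀)).integrable_of_hasCompactSupport
      (.intro hK (hF'K x₀ (Metric.mem_ball_self hr)))).aestronglyMeasurable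
  · refine .of_forall fun x ε hε => ?_
    by_cases hx : x ∈ K
    · rw [indicator_of_mem hx]
      exact hC (ε, x) ⟨Metric.ball_subset_closedBall hε, hx⟩
    · rw [indicator_of_notMem hx, hF'K ε hε x hx, norm_zero]
  · exact (integrableOn_const hK.measure_ne_top).integrable_indicator hK.measurableSet
  · exact .of_forall fun x ε hε => hderiv ε hε x

end ParametricIntegral

theorem HasCompactSupport.exists_isCompact_eq_zero_of_dist_le {α β : Type*}
    [PseudoMetricSpace α] [ProperSpace α] [Zero β] {f : α → β} (hf : HasCompactSupport f)
    (M : ℝ) : ∃ K, IsCompact K ∧ ∀ x ∉ K, ∀ y, dist y x ≤ M → f y = 0 :=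
  ⟨Metric.cthickening M (tsupport f), hf.isCompact.cthickening, fun x hx y hy =>
    image_eq_zero_of_notMem_tsupport fun hy' =>
      hx (Metric.mem_cthickening_of_dist_le x y M _ hy' (dist_comm x y ▸ hy))⟩

theorem dist_sub_sub_smul_le {E : Type*} [SeminormedAddCommGroup E] [NormedSpace ℝ E]
    {x u v : E} {M N ε : ℝ} (hu : ‖u‖ ≤ M) (hv : ‖v‖ ≤ N) (hε : ‖ε‖ ≤ 1) :
    dist (x - u - ε • v) x ≤ M + N := by
  have hεv : ‖ε • v‖ ≤ N := by
    rw [norm_smul]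
    exact (mul_le_mul hε hv (norm_nonneg v) zero_le_one).trans_eq (one_mul N)
  rw [dist_eq_norm, show x - u - ε • v - x = -(u + ε • v) by abel, norm_neg]
  exact (norm_add_le u _).trans (add_le_add hu hεv)

theorem hasDerivAt_comp_sub_smul {E F : Type*} [NormedAddCommGroup E] [NormedSpace ℝ E]
    [NormedAddCommGroup F] [NormedSpace ℝ F] {f : E → F} {y v : E} {ε : ℝ}
    (hf : DifferentiableAt ℝ f (y - ε • v)) :
    HasDerivAt (fun t : ℝ => f (y - t • v)) (-(fderiv ℝ f (y - ε • v) v)) ε := by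
  have h := hf.hasFDerivAt.comp_hasDerivAt ε (((hasDerivAt_id ε).smul_const v).const_sub y)
  simpa [Function.comp_def] using h

theorem ContDiff.continuous_gradient {E : Type*} [NormedAddCommGroup E] [InnerProductSpace ℝ E]
    [CompleteSpace E] {f : E → ℝ} {n : WithTop ℕ∞} (hf : ContDiff ℝ n f) (hn : n ≠ 0) :
    Continuous (gradient f) :=
  (InnerProductSpace.toDual ℝ E).symm.continuous.comp (hf.continuous_fderiv hn)

theorem hasGradientAt_chil (l x : E2) :
    HasGradientAt (chil l) ((-(2 * Real.cos ⟪l, x⟫)) • l) x := by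
  rw [hasGradientAt_iff_hasFDerivAt]
  convert ((Real.hasDerivAt_sin ⟪l, x⟫).comp_hasFDerivAt x
    (innerSL ℝ l).hasFDerivAt).const_smul (-2 : ℝ) using 2 with y
  · rfl
  · rfl
  · funext y
    simp only [chil, Pi.smul_apply, Function.comp_apply, smul_eq_mul]
    ring
  · ext v
    simp only [neg_smul, map_neg, map_smul, neg_apply, smul_apply,
      InnerProductSpace.toDual_apply_apply, smul_eq_mul, coe_innerSL_apply, neg_inj]
    ring

theorem gradient_chil (l : E2) : gradient (chil l) = fun x => (-(2 * Real.cos ⟪l, x⟫)) • l :=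
  funext fun x => (hasGradientAt_chil l x).gradient

theorem continuous_gradient_chil (l : E2) : Continuous (gradient (chil l)) := by
  rw [gradient_chil]; fun_prop

theorem norm_gradient_chil_le (l x : E2) : ‖gradient (chil l) x‖ ≤ 2 * ‖l‖ := by
  rw [gradient_chil, norm_smul, Real.norm_eq_abs, abs_neg, abs_mul, abs_two]
  gcongr
  nlinarith [Real.abs_cos_le_one ⟪l, x⟫]

theorem fderiv_apply_eq_sum_pderiv2 (f : E2 → ℝ) (y v : E2) :
    fderiv ℝ f y v = ∑ q, v q * pderiv2 q f y := by
  conv_lhs => rw [← (EuclideanSpace.basisFun (Fin 2) ℝ).sum_repr v]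
  simp [pderiv2]

theorem integrable_Aq {T φ : E2 → ℝ} (hT : ContDiff ℝ 1 T) (hTc : HasCompactSupport T)
    (hφ : ContDiff ℝ 1 φ) {Mφ : ℝ} (hbφ : ∀ x, ‖gradient φ x‖ ≤ Mφ) (q : Fin 2) :
    Integrable (Aq T φ q) := by
  obtain ⟨K, hK, hK0⟩ := (hTc.fderiv ℝ).exists_isCompact_eq_zero_of_dist_le Mφ
  have hcont : Continuous (Aq T φ q) :=
    ((hT.continuous_fderiv one_ne_zero).comp
      (continuous_id.sub (hφ.continuous_gradient one_ne_zero))).clm_apply continuous_const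
  refine hcont.integrable_of_hasCompactSupport (.intro hK fun x hx => ?_)
  have hdist : dist (x - gradient φ x) x ≤ Mφ := by
    rw [dist_eq_norm, sub_sub_cancel_left, norm_neg]; exact hbφ x
  rw [Aq, pderiv2, hK0 x hx _ hdist]
  rfl

theorem integrable_exp_mul {f : E2 → ℂ} (hf : Integrable f) (s : E2) :
    Integrable fun x => Complex.exp (-(Complex.I * (⟪x, s⟫ : ℂ))) * f x :=
  hf.bdd_mul (c := 1) (by fun_prop : Continuous _).aestronglyMeasurable
    (.of_forall fun x => by simp [Complex.norm_exp])

theorem ft_finset_sum_mul {ι : Type*} (s : Finset ι) (c : ι → ℂ) {f : ι → E2 → ℂ}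
    (hf : ∀ i ∈ s, Integrable (f i)) (k : E2) :
    ft (fun x => ∑ i ∈ s, c i * f i x) k = ∑ i ∈ s, c i * ft (f i) k := by
  simp only [ft, Finset.mul_sum]
  rw [integral_finsetSum _ fun i hi => (integrable_exp_mul ((hf i hi).const_mul (c i)) k),
    Finset.smul_sum]
  refine Finset.sum_congr rfl fun i _ => ?_
  rw [mul_smul_comm, ← integral_const_mul]
  congr 2; funext x; ring

theorem ft_add_add_ft_sub {f : E2 → ℂ} (hf : Integrable f) (k l : E2) :
    ft f (k + l) + ft f (k - l) = ft (fun x => ((2 * Real.cos ⟪x, l⟫ : ℝ) : ℂ) * f x) k := by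
  rw [ft, ft, ft, ← smul_add, ← integral_add (integrable_exp_mul hf _) (integrable_exp_mul hf _)]
  congr 2; funext x
  set a : ℂ := Complex.ofReal ⟪x, l⟫
  set b : ℂ := Complex.ofReal ⟪x, k⟫
  have h₁ : Complex.exp (-(Complex.I * (b + a))) = Complex.exp (-(Complex.I * b)) *
      Complex.exp (-a * Complex.I) := by rw [← Complex.exp_add]; ring_nf
  have h₂ : Complex.exp (-(Complex.I * (b - a))) = Complex.exp (-(Complex.I * b)) *
      Complex.exp (a * Complex.I) := by rw [← Complex.exp_add]; ring_nf
  rw [inner_add_right, inner_sub_right]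
  push_cast
  rw [h₁, h₂, Complex.cos]
  ring

theorem sum_mul_ftR_Aq_add_ftR_Aq_sub {T φ : E2 → ℝ} (hA : ∀ q, Integrable (Aq T φ q))
    (k l : E2) :
    ∑ q : Fin 2, ((l q : ℝ) : ℂ) * (ftR (Aq T φ q) (k + l) + ftR (Aq T φ q) (k - l)) =
      ft (fun x => ((2 * Real.cos ⟪x, l⟫ * fderiv ℝ T (x - gradient φ x) l : ℝ) : ℂ)) k := by
  have hA' : ∀ q ∈ Finset.univ, Integrable fun x => ((Aq T φ q x : ℝ) : ℂ) :=
    fun q _ => (hA q).ofReal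
  simp only [mul_add, Finset.sum_add_distrib, ftR, ← ft_finset_sum_mul _ _ hA']
  rw [ft_add_add_ft_sub (integrable_finsetSum _ fun q hq => (hA' q hq).const_mul _)]
  congr 1; funext x
  rw [fderiv_apply_eq_sum_pderiv2]
  push_cast
  simp only [Aq, Finset.mul_sum]

/-- Derivative of the Fourier coefficient of the anti-lensed field along the sine mode at
frequency `l`: it equals `∑_q l_q (Â^q(k+l) + Â^q(k-l))`. -/
theorem stmt6 (T : E2 → ℝ) (hT : ContDiff ℝ 1 T) (hTc : HasCompactSupport T)
    (φ : E2 → ℝ) (hφ : ContDiff ℝ 2 φ)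
    (Mφ : ℝ) (hbφ : ∀ x, ‖gradient φ x‖ ≤ Mφ)
    (k l : E2) :
    HasDerivAt
      (fun ε : ℝ => (2 * Real.pi)⁻¹ • ∫ x : E2,
        Complex.exp (-(Complex.I * (⟪x, k⟫ : ℂ))) *
          ((T (x - gradient φ x - ε • gradient (chil l) x) : ℝ) : ℂ))
      (∑ q : Fin 2, ((l q : ℝ) : ℂ) *
        (ftR (Aq T φ q) (k + l) + ftR (Aq T φ q) (k - l)))
      0 := by
  have hφ₁ : ContDiff ℝ 1 φ := hφ.of_le (by norm_num)
  have hgradφ := hφ₁.continuous_gradient one_ne_zero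
  have hgradχ := continuous_gradient_chil l
  have hT' := hT.continuous_fderiv one_ne_zero
  obtain ⟨K, hK, hTK⟩ := hTc.exists_isCompact_eq_zero_of_dist_le (Mφ + 2 * ‖l‖)
  have hsupp : ∀ ε ∈ Metric.ball (0 : ℝ) 1, ∀ x ∉ K,
      Complex.exp (-(Complex.I * (⟪x, k⟫ : ℂ))) *
        ((T (x - gradient φ x - ε • gradient (chil l) x) : ℝ) : ℂ) = 0 := by
    intro ε hε x hx
    rw [hTK x hx _ ?_, Complex.ofReal_zero, mul_zero]
    rw [Metric.mem_ball, dist_zero_right] at hε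
    exact dist_sub_sub_smul_le (hbφ x) (norm_gradient_chil_le l x) hε.le
  have hderiv := hasDerivAt_integral_of_continuous_of_compact_support (μ := volume) one_pos hK
    (F' := fun ε x => Complex.exp (-(Complex.I * (⟪x, k⟫ : ℂ))) *
      ((-(fderiv ℝ T (x - gradient φ x - ε • gradient (chil l) x) (gradient (chil l) x)) : ℝ) : ℂ))
    (fun ε => by fun_prop) (by fun_prop) hsupp <|
    fun ε _ x =>
      ((hasDerivAt_comp_sub_smul ((hT.differentiable one_ne_zero) _)).ofReal_comp).const_mul _
  refine (hderiv.const_smul (2 * Real.pi)⁻¹).congr_deriv ?_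
  rw [sum_mul_ftR_Aq_add_ftR_Aq_sub (integrable_Aq hT hTc hφ₁ hbφ), ft]
  congr 2; funext x
  simp [gradient_chil, real_inner_comm l x]
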